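/- Let F be a Banach lattice and let (y_i) be a disjoint sequence of positive elements of F such that inf_i ‖y_i‖ > 0 and sup_j ‖∑_{i=1}^{j} y_i‖ < ∞. Then the closed sublattice of F generated by (y_i) is linearly lattice isomorphic and topologically isomorphic to c₀. -/

import Mathlib

open Filter Topology ZeroAtInfty

namespace ZeroAtInftyContinuousMap

variable {α : Type*} [TopologicalSpace α]

/-- Pointwise supremum on `C₀(α, ℝ)`. -/
noncomputable instance : Max C₀(α, ℝ) where
  max f g :=
    { toFun := fun x => f x ⊔ g x
      continuous_toFun := (map_continuous f).sup (map_continuous g)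
      zero_at_infty' := by
        simpa using (zero_at_infty f).sup_nhds (zero_at_infty g) }

/-- Pointwise infimum on `C₀(α, ℝ)`. -/
noncomputable instance : Min C₀(α, ℝ) where
  min f g :=
    { toFun := fun x => f x ⊓ g x
      continuous_toFun := (map_continuous f).inf (map_continuous g)
      zero_at_infty' := by
        simpa using (zero_at_infty f).inf_nhds (zero_at_infty g) }

/-- `C₀(α, ℝ)` with the pointwise order is a lattice; in particular `c₀ = C₀(ℕ, ℝ)` is the
Banach lattice of real sequences converging to `0` with coordinatewise order. -/
noncomputable instance : Lattice C₀(α, ℝ) :=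
  letI : LE C₀(α, ℝ) := ⟨fun f g => ⇑f ≤ ⇑g⟩
  letI : LT C₀(α, ℝ) := ⟨fun f g => ⇑f < ⇑g⟩
  DFunLike.coe_injective.lattice _ .rfl .rfl (fun _ _ => rfl) (fun _ _ => rfl)

end ZeroAtInftyContinuousMap

/-- The ordered-module class `OrderedSMul` of the older Mathlib (removed since), with its
original meaning. -/
class OrderedSMul (R M : Type*) [Semiring R] [PartialOrder R] [AddCommMonoid M] [PartialOrder M]
    [SMulWithZero R M] : Prop where
  protected smul_lt_smul_of_pos : ∀ {a b : M} {c : R}, a < b → 0 < c → c • a < c • b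
  protected lt_of_smul_lt_smul_of_pos : ∀ {a b : M} {c : R}, c • a < c • b → 0 < c → a < b

/-! The map `f ↦ ∑ fᵢ yᵢ` realises the isomorphism. Disjointness gives
`|∑ aᵢ yᵢ| = ∑ |aᵢ| yᵢ`, so the map commutes with `|·|`, hence with `⊔` and `⊓`. Since the norm is
solid, this identity bounds `‖∑ aᵢ yᵢ‖` above by `sup |aᵢ| · sup_j ‖∑_{i<j} yᵢ‖` (which also makes
the series converge for `a ∈ c₀`) and below by `|aⱼ| ‖yⱼ‖ ≥ |aⱼ| · inf ‖yᵢ‖`. The range of an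
isomorphism onto its image is closed; it is then a closed sublattice containing every `yᵢ` and
contained in the closed span of the `yᵢ`, so it is the closed sublattice they generate. -/

instance OrderedSMul.toPosSMulStrictMono {R M : Type*} [Semiring R] [PartialOrder R]
    [AddCommMonoid M] [PartialOrder M] [SMulWithZero R M] [OrderedSMul R M] :
    PosSMulStrictMono R M :=
  ⟨fun _ hc _ _ hab => OrderedSMul.smul_lt_smul_of_pos hab hc⟩

section LatticeOrderedGroup

variable {α : Type*} [Lattice α] [AddCommGroup α] [IsOrderedAddMonoid α]

lemma inf_add_le_inf_add_inf {u v w : α} (hu : 0 ≤ u) (hv : 0 ≤ v) (hw : 0 ≤ w) :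
    u ⊓ (v + w) ≤ u ⊓ v + u ⊓ w := by
  have h : u ⊓ (v + w) - u ⊓ w ≤ u ⊓ v := by
    rw [sub_inf]
    refine sup_le ((sub_nonpos.2 inf_le_left).trans (le_inf hu hv)) (le_inf ?_ ?_)
    · exact (sub_le_self _ hw).trans inf_le_left
    · exact sub_le_iff_le_add.2 inf_le_right
  simpa using add_le_add_left h (u ⊓ w)

lemma inf_sum_eq_zero {ι : Type*} {u : α} (hu : 0 ≤ u) {v : ι → α} {s : Finset ι}
    (hv : ∀ i ∈ s, 0 ≤ v i) (h : ∀ i ∈ s, u ⊓ v i = 0) : u ⊓ ∑ i ∈ s, v i = 0 := by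
  induction s using Finset.cons_induction with
  | empty => simpa using hu
  | cons a s ha ih =>
    simp only [Finset.mem_cons, forall_eq_or_imp] at hv h
    rw [Finset.sum_cons]
    refine le_antisymm ?_ (le_inf hu (add_nonneg hv.1 (Finset.sum_nonneg hv.2)))
    calc u ⊓ (v a + ∑ i ∈ s, v i) ≤ u ⊓ v a + u ⊓ ∑ i ∈ s, v i :=
          inf_add_le_inf_add_inf hu hv.1 (Finset.sum_nonneg hv.2)
      _ = 0 := by rw [h.1, ih hv.2 h.2, add_zero]

lemma abs_le_abs_add_of_inf_abs_eq_zero {a b : α} (h : |a| ⊓ |b| = 0) : |a| ≤ |a + b| := by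
  have h_sub : |a| - |b| ≤ |a + b| := by
    simpa using (le_abs_self _).trans (abs_abs_sub_abs_le a (-b))
  calc |a| = |a| - |a| ⊓ |b| := by rw [h, sub_zero]
    _ = 0 ⊔ (|a| - |b|) := by rw [sub_inf, sub_self]
    _ ≤ |a + b| := sup_le (abs_nonneg _) h_sub

lemma abs_add_eq_add_abs_of_inf_abs_eq_zero {a b : α} (h : |a| ⊓ |b| = 0) :
    |a + b| = |a| + |b| := by
  refine le_antisymm (abs_add_le a b) ?_
  have hb : |b| ≤ |a + b| := by
    rw [add_comm]; exact abs_le_abs_add_of_inf_abs_eq_zero (by rwa [inf_comm])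
  calc |a| + |b| = |a| ⊓ |b| + |a| ⊔ |b| := (inf_add_sup _ _).symm
    _ = |a| ⊔ |b| := by rw [h, zero_add]
    _ ≤ |a + b| := sup_le (abs_le_abs_add_of_inf_abs_eq_zero h) hb

end LatticeOrderedGroup

section LatticeOrderedModule

variable {𝕜 α : Type*} [Field 𝕜] [LinearOrder 𝕜] [IsStrictOrderedRing 𝕜]
  [Lattice α] [AddCommGroup α] [IsOrderedAddMonoid α] [Module 𝕜 α] [PosSMulMono 𝕜 α]

lemma abs_smul_of_nonneg_right {x : α} (hx : 0 ≤ x) (r : 𝕜) : |r • x| = |r| • x := by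
  rcases le_total 0 r with hr | hr
  · rw [abs_of_nonneg (smul_nonneg hr hx), abs_of_nonneg hr]
  · rw [abs_of_nonpos (smul_nonpos_of_nonpos_of_nonneg hr hx), abs_of_nonpos hr, neg_smul]

lemma smul_inf_smul_eq_zero {x y : α} (hx : 0 ≤ x) (hy : 0 ≤ y) (hxy : x ⊓ y = 0)
    {r s : 𝕜} (hr : 0 ≤ r) (hs : 0 ≤ s) : (r • x) ⊓ (s • y) = 0 := by
  have ht : (0 : 𝕜) < r + s + 1 := by linarith
  refine le_antisymm ?_ (le_inf (smul_nonneg hr hx) (smul_nonneg hs hy))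
  calc (r • x) ⊓ (s • y) ≤ ((r + s + 1) • x) ⊓ ((r + s + 1) • y) :=
        inf_le_inf (smul_le_smul_of_nonneg_right (by linarith) hx)
          (smul_le_smul_of_nonneg_right (by linarith) hy)
    _ = (r + s + 1) • (x ⊓ y) := ((OrderIso.smulRight ht).map_inf x y).symm
    _ = 0 := by rw [hxy, smul_zero]

lemma abs_sum_smul_of_pairwise_inf_eq_zero {ι : Type*} {y : ι → α} (hpos : ∀ i, 0 ≤ y i)
    (hdisj : Pairwise fun i j => y i ⊓ y j = 0) (a : ι → 𝕜) (s : Finset ι) :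
    |∑ i ∈ s, a i • y i| = ∑ i ∈ s, |a i| • y i := by
  induction s using Finset.cons_induction with
  | empty => simp
  | cons j s hj ih =>
    have h_inf : |a j • y j| ⊓ |∑ i ∈ s, a i • y i| = 0 := by
      rw [ih, abs_smul_of_nonneg_right (hpos j)]
      refine inf_sum_eq_zero (smul_nonneg (abs_nonneg _) (hpos j))
        (fun i _ => smul_nonneg (abs_nonneg _) (hpos i)) fun i hi => ?_
      exact smul_inf_smul_eq_zero (hpos j) (hpos i) (hdisj (ne_of_mem_of_not_mem hi hj).symm)
        (abs_nonneg _) (abs_nonneg _)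
    rw [Finset.sum_cons, Finset.sum_cons, abs_add_eq_add_abs_of_inf_abs_eq_zero h_inf, ih,
      abs_smul_of_nonneg_right (hpos j)]

end LatticeOrderedModule

lemma Submodule.sup_mem_of_abs_mem {𝕜 α : Type*} [DivisionRing 𝕜] [NeZero (2 : 𝕜)]
    [Lattice α] [AddCommGroup α] [IsOrderedAddMonoid α] [Module 𝕜 α] (H : Submodule 𝕜 α)
    (habs : ∀ x ∈ H, |x| ∈ H) {a b : α} (ha : a ∈ H) (hb : b ∈ H) : a ⊔ b ∈ H := by
  rw [sup_eq_half_smul_add_add_abs_sub' 𝕜]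
  exact H.smul_mem _ (H.add_mem (H.add_mem ha hb) (habs _ (H.sub_mem hb ha)))

lemma Submodule.inf_mem_of_abs_mem {𝕜 α : Type*} [DivisionRing 𝕜] [NeZero (2 : 𝕜)]
    [Lattice α] [AddCommGroup α] [IsOrderedAddMonoid α] [Module 𝕜 α] (H : Submodule 𝕜 α)
    (habs : ∀ x ∈ H, |x| ∈ H) {a b : α} (ha : a ∈ H) (hb : b ∈ H) : a ⊓ b ∈ H := by
  rw [inf_eq_half_smul_add_sub_abs_sub' 𝕜]
  exact H.smul_mem _ (H.sub_mem (H.add_mem ha hb) (habs _ (H.sub_mem hb ha)))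

section DisjointSequence

open Finset

variable {F : Type*} [NormedAddCommGroup F] [Lattice F] [IsOrderedAddMonoid F] [HasSolidNorm F]
  [NormedSpace ℝ F] [PosSMulMono ℝ F] {y : ℕ → F}

lemma norm_sum_smul_le_of_abs_le (hpos : ∀ i, 0 ≤ y i) (hdisj : Pairwise fun i j => y i ⊓ y j = 0)
    {M : ℝ} (hM : ∀ n, ‖∑ i ∈ range n, y i‖ ≤ M) {a : ℕ → ℝ} {s : Finset ℕ} {ε : ℝ}
    (hε : 0 ≤ ε) (ha : ∀ i ∈ s, |a i| ≤ ε) : ‖∑ i ∈ s, a i • y i‖ ≤ ε * M := by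
  obtain ⟨n, hsn⟩ := s.exists_nat_subset_range
  have h_abs : |∑ i ∈ s, a i • y i| ≤ ε • ∑ i ∈ range n, y i := by
    rw [abs_sum_smul_of_pairwise_inf_eq_zero hpos hdisj, smul_sum]
    calc ∑ i ∈ s, |a i| • y i ≤ ∑ i ∈ s, ε • y i :=
          sum_le_sum fun i hi => smul_le_smul_of_nonneg_right (ha i hi) (hpos i)
      _ ≤ ∑ i ∈ range n, ε • y i :=
          sum_le_sum_of_subset_of_nonneg hsn fun i _ _ => smul_nonneg hε (hpos i)
  have h_nonneg : 0 ≤ ε • ∑ i ∈ range n, y i := smul_nonneg hε (sum_nonneg fun i _ => hpos i)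
  calc ‖∑ i ∈ s, a i • y i‖ ≤ ‖ε • ∑ i ∈ range n, y i‖ :=
        HasSolidNorm.solid (by rwa [abs_of_nonneg h_nonneg])
    _ = ε * ‖∑ i ∈ range n, y i‖ := by rw [norm_smul, Real.norm_of_nonneg hε]
    _ ≤ ε * M := mul_le_mul_of_nonneg_left (hM n) hε

lemma summable_smul_of_tendsto_zero [CompleteSpace F] (hpos : ∀ i, 0 ≤ y i)
    (hdisj : Pairwise fun i j => y i ⊓ y j = 0) {M : ℝ} (hM : ∀ n, ‖∑ i ∈ range n, y i‖ ≤ M)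
    {a : ℕ → ℝ} (ha : Tendsto a atTop (𝓝 0)) : Summable fun i => a i • y i := by
  have hM0 : 0 ≤ M := by simpa using hM 0
  refine summable_iff_vanishing_norm.2 fun ε hε => ?_
  have hδ : 0 < ε / (M + 1) := by positivity
  obtain ⟨n, hn⟩ := Metric.tendsto_atTop.1 ha _ hδ
  refine ⟨range n, fun s hs => ?_⟩
  have h_small : ∀ i ∈ s, |a i| ≤ ε / (M + 1) := fun i hi => by
    simpa using (hn i (not_lt.1 fun h => disjoint_left.1 hs hi (mem_range.2 h))).le
  calc ‖∑ i ∈ s, a i • y i‖ ≤ ε / (M + 1) * M :=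
        norm_sum_smul_le_of_abs_le hpos hdisj hM hδ.le h_small
    _ < ε := by rw [div_mul_eq_mul_div, div_lt_iff₀ (by positivity)]; nlinarith

lemma hasSum_abs_smul (hpos : ∀ i, 0 ≤ y i) (hdisj : Pairwise fun i j => y i ⊓ y j = 0)
    {a : ℕ → ℝ} (ha : Summable fun i => a i • y i) :
    HasSum (fun i => |a i| • y i) |∑' i, a i • y i| := by
  have h_abs : Continuous fun x : F => |x| := continuous_id.sup continuous_neg
  have h := (h_abs.tendsto _).comp ha.hasSum
  simp only [Function.comp_def, abs_sum_smul_of_pairwise_inf_eq_zero hpos hdisj] at h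
  exact h

lemma abs_mul_norm_le_norm_tsum_smul (hpos : ∀ i, 0 ≤ y i)
    (hdisj : Pairwise fun i j => y i ⊓ y j = 0) {a : ℕ → ℝ} (ha : Summable fun i => a i • y i)
    (j : ℕ) : |a j| * ‖y j‖ ≤ ‖∑' i, a i • y i‖ := by
  have h_le : |a j| • y j ≤ |∑' i, a i • y i| :=
    le_hasSum (hasSum_abs_smul hpos hdisj ha) j fun i _ => smul_nonneg (abs_nonneg _) (hpos i)
  calc |a j| * ‖y j‖ = ‖|a j| • y j‖ := by rw [norm_smul, Real.norm_eq_abs, abs_abs]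
    _ ≤ ‖|∑' i, a i • y i|‖ := HasSolidNorm.solid (by
        rwa [abs_of_nonneg (smul_nonneg (abs_nonneg _) (hpos j)), abs_abs])
    _ = ‖∑' i, a i • y i‖ := norm_abs_eq_norm _

lemma norm_tsum_smul_le_of_abs_le (hpos : ∀ i, 0 ≤ y i) (hdisj : Pairwise fun i j => y i ⊓ y j = 0)
    {M : ℝ} (hM : ∀ n, ‖∑ i ∈ range n, y i‖ ≤ M) {a : ℕ → ℝ} (ha : Summable fun i => a i • y i)
    {ε : ℝ} (hε : 0 ≤ ε) (hae : ∀ i, |a i| ≤ ε) : ‖∑' i, a i • y i‖ ≤ ε * M :=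
  le_of_tendsto ((continuous_norm.tendsto _).comp ha.hasSum) <| Eventually.of_forall fun _ =>
    norm_sum_smul_le_of_abs_le hpos hdisj hM hε fun i _ => hae i

end DisjointSequence

namespace ZeroAtInftyContinuousMap

variable {α : Type*} [TopologicalSpace α]

lemma abs_apply_le_norm (f : C₀(α, ℝ)) (x : α) : |f x| ≤ ‖f‖ := by
  simpa [norm_toBCF_eq_norm] using f.toBCF.norm_coe_le_norm x

lemma norm_le_of_forall_abs_apply_le {f : C₀(α, ℝ)} {C : ℝ} (hC : 0 ≤ C)
    (h : ∀ x, |f x| ≤ C) : ‖f‖ ≤ C := by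
  rw [← norm_toBCF_eq_norm]
  exact (BoundedContinuousFunction.norm_le hC).2 h

lemma tendsto_atTop_zero {β : Type*} [TopologicalSpace β] [Zero β] (f : C₀(ℕ, β)) :
    Tendsto f atTop (𝓝 0) := by
  simpa [cocompact_eq_atTop] using zero_at_infty f

def single [DiscreteTopology α] [DecidableEq α] {β : Type*} [TopologicalSpace β] [Zero β]
    (i : α) (b : β) : C₀(α, β) where
  toFun := (Pi.single i b : α → β)
  continuous_toFun := continuous_of_discreteTopology
  zero_at_infty' := by
    rw [cocompact_eq_cofinite]
    exact tendsto_nhds_of_eventually_eq <|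
      (eventually_cofinite_ne i).mono fun _ hx => by simp [hx]

@[simp]
lemma single_apply [DiscreteTopology α] [DecidableEq α] {β : Type*} [TopologicalSpace β]
    [Zero β] (i : α) (b : β) (x : α) : single i b x = (Pi.single i b : α → β) x := rfl

end ZeroAtInftyContinuousMap

lemma Submodule.coe_eq_sInter_closed_sublattices {R F ι : Type*} [Semiring R]
    [TopologicalSpace F] [Lattice F] [AddCommMonoid F] [Module R F] {y : ι → F}
    (H : Submodule R F) (hclosed : IsClosed (H : Set F))
    (hlat : ∀ a ∈ H, ∀ b ∈ H, a ⊔ b ∈ H ∧ a ⊓ b ∈ H) (hy : Set.range y ⊆ H)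
    (hdense : (H : Set F) ⊆ closure (span R (Set.range y))) :
    (H : Set F) = ⋂₀ {A : Set F | IsClosed A ∧ Set.range y ⊆ A ∧
      ∃ H : Submodule R F, (H : Set F) = A ∧ ∀ a ∈ H, ∀ b ∈ H, a ⊔ b ∈ H ∧ a ⊓ b ∈ H} := by
  refine subset_antisymm ?_ (Set.sInter_subset_of_mem ⟨hclosed, hy, H, rfl, hlat⟩)
  rintro x hx A ⟨hA, hyA, H', rfl, -⟩
  exact closure_minimal (span_le.2 hyA) hA (hdense hx)

section C0Embedding

open ZeroAtInftyContinuousMap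

variable {F : Type*} [NormedAddCommGroup F] [NormedSpace ℝ F] {y : ℕ → F}
  (hs : ∀ f : C₀(ℕ, ℝ), Summable fun i => f i • y i)

variable (y) in
noncomputable def tsumSMulLinearMap : C₀(ℕ, ℝ) →ₗ[ℝ] F where
  toFun f := ∑' i, f i • y i
  map_add' f g := by
    simp only [ZeroAtInftyContinuousMap.add_apply, add_smul]
    exact (hs f).tsum_add (hs g)
  map_smul' r f := by
    simp only [ZeroAtInftyContinuousMap.smul_apply, smul_eq_mul, mul_smul, RingHom.id_apply]
    exact (hs f).tsum_const_smul r

lemma tsumSMulLinearMap_apply (f : C₀(ℕ, ℝ)) :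
    tsumSMulLinearMap y hs f = ∑' i, f i • y i := rfl

lemma tsumSMulLinearMap_single (i : ℕ) : tsumSMulLinearMap y hs (single i 1) = y i := by
  rw [tsumSMulLinearMap_apply, tsum_eq_single i fun n hn => by simp [hn]]
  simp

lemma tsumSMulLinearMap_mem_closure_span (f : C₀(ℕ, ℝ)) :
    tsumSMulLinearMap y hs f ∈ closure (Submodule.span ℝ (Set.range y) : Set F) :=
  mem_closure_of_tendsto (hs f).hasSum <| Eventually.of_forall fun _ =>
    Submodule.sum_mem _ fun i _ => Submodule.smul_mem _ _ (Submodule.subset_span ⟨i, rfl⟩)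

variable [Lattice F] [IsOrderedAddMonoid F] [HasSolidNorm F] [PosSMulMono ℝ F]

lemma tsumSMulLinearMap_abs (hpos : ∀ i, 0 ≤ y i) (hdisj : Pairwise fun i j => y i ⊓ y j = 0)
    (f : C₀(ℕ, ℝ)) : tsumSMulLinearMap y hs |f| = |tsumSMulLinearMap y hs f| :=
  (hasSum_abs_smul hpos hdisj (hs f)).tsum_eq

lemma norm_tsumSMulLinearMap_le (hpos : ∀ i, 0 ≤ y i) (hdisj : Pairwise fun i j => y i ⊓ y j = 0)
    {M : ℝ} (hM : ∀ n, ‖∑ i ∈ Finset.range n, y i‖ ≤ M) (f : C₀(ℕ, ℝ)) :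
    ‖tsumSMulLinearMap y hs f‖ ≤ M * ‖f‖ := by
  rw [mul_comm]
  exact norm_tsum_smul_le_of_abs_le hpos hdisj hM (hs f) (norm_nonneg f) f.abs_apply_le_norm

lemma mul_norm_le_norm_tsumSMulLinearMap (hpos : ∀ i, 0 ≤ y i)
    (hdisj : Pairwise fun i j => y i ⊓ y j = 0) {c : ℝ} (hc : 0 < c) (hcy : ∀ i, c ≤ ‖y i‖)
    (f : C₀(ℕ, ℝ)) : c * ‖f‖ ≤ ‖tsumSMulLinearMap y hs f‖ := by
  rw [← le_div_iff₀' hc]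
  refine norm_le_of_forall_abs_apply_le (by positivity) fun i => ?_
  rw [le_div_iff₀' hc]
  calc c * |f i| ≤ |f i| * ‖y i‖ := by rw [mul_comm]; gcongr; exact hcy i
    _ ≤ ‖tsumSMulLinearMap y hs f‖ := abs_mul_norm_le_norm_tsum_smul hpos hdisj (hs f) i

end C0Embedding

/-- Let `F` be a Banach lattice and `(yᵢ)` a disjoint sequence of positive
elements with `inf_i ‖yᵢ‖ > 0` and uniformly bounded partial sums. Then the closed sublattice
of `F` generated by `(yᵢ)` is linearly lattice isomorphic and topologically isomorphic
to `c₀`. -/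
theorem stmt13 (F : Type*) [NormedAddCommGroup F] [Lattice F] [IsOrderedAddMonoid F] [HasSolidNorm F]
    [NormedSpace ℝ F] [OrderedSMul ℝ F]
    [CompleteSpace F]
    (y : ℕ → F) (hpos : ∀ i, 0 ≤ y i) (hdisj : ∀ m i : ℕ, m ≠ i → y m ⊓ y i = 0)
    (hinf : ∃ c > (0 : ℝ), ∀ i, c ≤ ‖y i‖)
    (hsum : ∃ M : ℝ, ∀ j : ℕ, ‖∑ i ∈ Finset.range j, y i‖ ≤ M) :
    ∃ S : C₀(ℕ, ℝ) →ₗ[ℝ] F,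
      Function.Injective S ∧
      (∀ f : C₀(ℕ, ℝ), S |f| = |S f|) ∧
      Set.range S =
        ⋂₀ {A : Set F | IsClosed A ∧ Set.range y ⊆ A ∧
          ∃ H : Submodule ℝ F, (H : Set F) = A ∧ ∀ a ∈ H, ∀ b ∈ H, a ⊔ b ∈ H ∧ a ⊓ b ∈ H} ∧
      ∃ C₁ > (0 : ℝ), ∃ C₂ > (0 : ℝ),
        ∀ f : C₀(ℕ, ℝ), C₁ * ‖f‖ ≤ ‖S f‖ ∧ ‖S f‖ ≤ C₂ * ‖f‖ := by
  obtain ⟨c, hc, hcy⟩ := hinf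
  obtain ⟨M, hM⟩ := hsum
  have hM0 : 0 ≤ M := by simpa using hM 0
  have hdisj' : Pairwise fun m i => y m ⊓ y i = 0 := fun m i hmi => hdisj m i hmi
  have hs : ∀ f : C₀(ℕ, ℝ), Summable fun i => f i • y i := fun f =>
    summable_smul_of_tendsto_zero hpos hdisj' hM f.tendsto_atTop_zero
  set S := tsumSMulLinearMap y hs
  have hlow := mul_norm_le_norm_tsumSMulLinearMap hs hpos hdisj' hc hcy
  have hup := norm_tsumSMulLinearMap_le hs hpos hdisj' hM
  obtain ⟨K, hK⟩ := antilipschitzWith_iff_exists_mul_le_norm.2 ⟨c, hc, hlow⟩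
  have hclosed : IsClosed (Set.range S) :=
    hK.isClosed_range (AddMonoidHomClass.lipschitz_of_bound S M hup).uniformContinuous
  have habs : ∀ x ∈ LinearMap.range S, |x| ∈ LinearMap.range S := by
    rintro _ ⟨f, rfl⟩
    exact ⟨|f|, tsumSMulLinearMap_abs hs hpos hdisj' f⟩
  refine ⟨S, hK.injective, tsumSMulLinearMap_abs hs hpos hdisj', ?_, c, hc, M + 1, by linarith,
    fun f => ⟨hlow f, (hup f).trans (by gcongr; linarith)⟩⟩
  rw [← LinearMap.coe_range]
  refine (LinearMap.range S).coe_eq_sInter_closed_sublattices (by rwa [LinearMap.coe_range])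
    (fun a ha b hb => ⟨Submodule.sup_mem_of_abs_mem _ habs ha hb,
      Submodule.inf_mem_of_abs_mem _ habs ha hb⟩) ?_ ?_
  · rintro _ ⟨i, rfl⟩
    exact ⟨_, tsumSMulLinearMap_single hs i⟩
  · rintro _ ⟨f, rfl⟩
    exact tsumSMulLinearMap_mem_closure_span hs f
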